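/- arXiv:2202.00415 — 3 statements merged into one kernel-verified Lean document; each statement's English description precedes it below -/
import Mathlib

section
/- Let K be an algebraically closed field of characteristic 0 and identify the Laurent polynomial ring K[x₁^{±1},…,x_d^{±1}] with the group algebra K[ℤ^d]. Let e = (e₁,…,e_d) ∈ ℤ^d ∖ {0}, let t = gcd(e₁,…,e_d), let c ∈ K^×, let ζ ∈ K^× be a primitive t-th root of unity, and let b ∈ K^× with b^t = c. Then in K[ℤ^d] one has the factorization 1 − c·x^e = Π_{j=1}^t (1 − ζ^j b·x^{e/t}), and each factor 1 − ζ^j b·x^{e/t} is irreducible in K[ℤ^d]. In particular, 1 − c·x^e is irreducible in K[ℤ^d] if and only if gcd(e₁,…,e_d) = 1. -/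
open AddMonoidAlgebra Finset

section Aux

variable {K : Type*} [Field K] {d : ℕ}

/-- Bezout for finsets of integers. -/
lemma laurent_aux_bezout (g : Fin d → ℤ) (s : Finset (Fin d)) :
    ∃ μ : Fin d → ℤ, ∑ i ∈ s, μ i * g i = s.gcd g := by
  classical
  induction s using Finset.induction_on with
  | empty => exact ⟨0, by simp⟩
  | @insert a s ha ih =>
    obtain ⟨μ, hμ⟩ := ih
    refine ⟨fun i => if i = a then (g a).gcdA (s.gcd g) else (g a).gcdB (s.gcd g) * μ i, ?_⟩
    rw [Finset.sum_insert ha, Finset.gcd_insert, ← Int.coe_gcd, Int.gcd_eq_gcd_ab]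
    have hterm : ∑ i ∈ s, (if i = a then (g a).gcdA (s.gcd g) else (g a).gcdB (s.gcd g) * μ i) * g i
        = (g a).gcdB (s.gcd g) * ∑ i ∈ s, μ i * g i := by
      rw [Finset.mul_sum]
      refine Finset.sum_congr rfl fun i hi => ?_
      rw [if_neg (by rintro rfl; exact ha hi), mul_assoc]
    simp only [eq_self_iff_true, if_true, if_pos]
    rw [hterm, hμ]
    ring

lemma laurent_aux_exists_phi (g : Fin d → ℤ) (hg : Finset.univ.gcd g = 1) :
    ∃ φ : (Fin d → ℤ) →+ ℤ, φ g = 1 := by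
  obtain ⟨μ, hμ⟩ := laurent_aux_bezout g Finset.univ
  refine ⟨{ toFun := fun v => ∑ i, μ i * v i
            map_zero' := by simp
            map_add' := by intro x y; simp [mul_add, Finset.sum_add_distrib] }, ?_⟩
  simpa [hg] using hμ

lemma laurent_filter_eq_self {p : (Fin d → ℤ) → Prop} [DecidablePred p]
    {u : AddMonoidAlgebra K (Fin d → ℤ)} (h : ∀ x ∈ u.coeff.support, p x) :
    AddMonoidAlgebra.ofCoeff (Finsupp.filter p u.coeff) = u := by
  ext a
  rw [AddMonoidAlgebra.coeff_ofCoeff, Finsupp.filter_apply]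
  by_cases hp : p a
  · rw [if_pos hp]
  · rw [if_neg hp]
    by_contra h0
    exact hp (h a (Finsupp.mem_support_iff.2 fun hu => h0 hu.symm))

lemma laurent_filter_eq_zero {p : (Fin d → ℤ) → Prop} [DecidablePred p]
    {u : AddMonoidAlgebra K (Fin d → ℤ)} (h : ∀ x ∈ u.coeff.support, ¬ p x) :
    AddMonoidAlgebra.ofCoeff (Finsupp.filter p u.coeff) = 0 := by
  ext a
  rw [AddMonoidAlgebra.coeff_ofCoeff, Finsupp.filter_apply]
  by_cases hp : p a
  · rw [if_pos hp]
    by_cases hu : a ∈ u.coeff.support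
    · exact absurd hp (h a hu)
    · simpa [Finsupp.notMem_support_iff] using hu
  · rw [if_neg hp]; rfl

lemma laurent_filter_add_not (p : (Fin d → ℤ) → Prop) [DecidablePred p]
    (u : AddMonoidAlgebra K (Fin d → ℤ)) :
    AddMonoidAlgebra.ofCoeff (Finsupp.filter p u.coeff)
      + AddMonoidAlgebra.ofCoeff (Finsupp.filter (fun x => ¬ p x) u.coeff) = u := by
  ext a
  rw [AddMonoidAlgebra.coeff_add, Finsupp.add_apply, AddMonoidAlgebra.coeff_ofCoeff,
    AddMonoidAlgebra.coeff_ofCoeff, Finsupp.filter_apply, Finsupp.filter_apply]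
  by_cases hp : p a <;> simp [hp]

open Classical in
/-- the minimum of `φ` over the support of `u` (0 if `u = 0`). -/
noncomputable def laurentLo (φ : (Fin d → ℤ) →+ ℤ) (u : AddMonoidAlgebra K (Fin d → ℤ)) : ℤ :=
  if h : u = 0 then 0 else (u.coeff.support.image φ).min' (by
    rw [Finset.image_nonempty]; exact Finsupp.support_nonempty_iff.2 (AddMonoidAlgebra.coeff_eq_zero.not.2 h))

lemma laurentLo_le (φ : (Fin d → ℤ) →+ ℤ) {u : AddMonoidAlgebra K (Fin d → ℤ)}
    (hu : u ≠ 0) {x : Fin d → ℤ} (hx : x ∈ u.coeff.support) : laurentLo φ u ≤ φ x := by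
  rw [laurentLo, dif_neg hu]
  exact Finset.min'_le _ _ (Finset.mem_image_of_mem φ hx)

lemma laurentLo_attained (φ : (Fin d → ℤ) →+ ℤ) {u : AddMonoidAlgebra K (Fin d → ℤ)}
    (hu : u ≠ 0) : ∃ x ∈ u.coeff.support, φ x = laurentLo φ u := by
  rw [laurentLo, dif_neg hu]
  have := Finset.min'_mem (u.coeff.support.image φ) (by
    rw [Finset.image_nonempty]; exact Finsupp.support_nonempty_iff.2 (AddMonoidAlgebra.coeff_eq_zero.not.2 hu))
  rw [Finset.mem_image] at this
  obtain ⟨x, hx, hx'⟩ := this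
  exact ⟨x, hx, hx'⟩

/-- the component of `u` in the fiber `φ = n`, as an element of the monoid algebra. -/
noncomputable def laurentCmp (φ : (Fin d → ℤ) →+ ℤ) (n : ℤ)
    (u : AddMonoidAlgebra K (Fin d → ℤ)) : AddMonoidAlgebra K (Fin d → ℤ) :=
  AddMonoidAlgebra.ofCoeff (Finsupp.filter (fun x => φ x = n) u.coeff)

lemma laurentCmp_eq (φ : (Fin d → ℤ) →+ ℤ) (n : ℤ) (u : AddMonoidAlgebra K (Fin d → ℤ)) :
    laurentCmp φ n u = AddMonoidAlgebra.ofCoeff (Finsupp.filter (fun x => φ x = n) u.coeff) := rfl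

lemma laurent_cmp_ne_zero (φ : (Fin d → ℤ) →+ ℤ) {u : AddMonoidAlgebra K (Fin d → ℤ)}
    (hu : u ≠ 0) : laurentCmp φ (laurentLo φ u) u ≠ 0 := by
  obtain ⟨x, hx, hφx⟩ := laurentLo_attained φ hu
  intro h0
  rw [laurentCmp_eq] at h0
  have := congrArg (fun w : AddMonoidAlgebra K (Fin d → ℤ) => w.coeff x) h0
  simp only [AddMonoidAlgebra.coeff_ofCoeff, Finsupp.filter_apply, if_pos hφx,
    AddMonoidAlgebra.coeff_zero, Finsupp.coe_zero, Pi.zero_apply] at this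
  exact Finsupp.mem_support_iff.1 hx this

lemma laurent_cmp_mul (φ : (Fin d → ℤ) →+ ℤ) {u v : AddMonoidAlgebra K (Fin d → ℤ)}
    (hu : u ≠ 0) (hv : v ≠ 0) :
    laurentCmp φ (laurentLo φ u + laurentLo φ v) (u * v)
      = laurentCmp φ (laurentLo φ u) u * laurentCmp φ (laurentLo φ v) v := by
  classical
  simp only [laurentCmp_eq]
  set mu := laurentLo φ u with hmu
  set mv := laurentLo φ v with hmv
  set cu : AddMonoidAlgebra K (Fin d → ℤ) := AddMonoidAlgebra.ofCoeff (Finsupp.filter (fun x => φ x = mu) u.coeff) with hcu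
  set cv : AddMonoidAlgebra K (Fin d → ℤ) := AddMonoidAlgebra.ofCoeff (Finsupp.filter (fun x => φ x = mv) v.coeff) with hcv
  set u' : AddMonoidAlgebra K (Fin d → ℤ) := AddMonoidAlgebra.ofCoeff (Finsupp.filter (fun x => ¬ φ x = mu) u.coeff) with hu'd
  set v' : AddMonoidAlgebra K (Fin d → ℤ) := AddMonoidAlgebra.ofCoeff (Finsupp.filter (fun x => ¬ φ x = mv) v.coeff) with hv'd
  have hud : u = cu + u' := (laurent_filter_add_not _ u).symm
  have hvd : v = cv + v' := (laurent_filter_add_not _ v).symm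
  have hscu : ∀ x ∈ cu.coeff.support, φ x = mu := by
    intro x hx
    rw [hcu, AddMonoidAlgebra.coeff_ofCoeff, Finsupp.support_filter, Finset.mem_filter] at hx
    exact hx.2
  have hscv : ∀ x ∈ cv.coeff.support, φ x = mv := by
    intro x hx
    rw [hcv, AddMonoidAlgebra.coeff_ofCoeff, Finsupp.support_filter, Finset.mem_filter] at hx
    exact hx.2
  have hsu' : ∀ x ∈ u'.coeff.support, mu < φ x := by
    intro x hx
    rw [hu'd, AddMonoidAlgebra.coeff_ofCoeff, Finsupp.support_filter, Finset.mem_filter] at hx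
    exact lt_of_le_of_ne (laurentLo_le φ hu hx.1) (Ne.symm hx.2)
  have hsv' : ∀ x ∈ v'.coeff.support, mv < φ x := by
    intro x hx
    rw [hv'd, AddMonoidAlgebra.coeff_ofCoeff, Finsupp.support_filter, Finset.mem_filter] at hx
    exact lt_of_le_of_ne (laurentLo_le φ hv hx.1) (Ne.symm hx.2)
  have hexp : u * v = cu * cv + (cu * v' + (u' * cv + u' * v')) := by
    rw [hud, hvd]; ring
  have key : ∀ (w₁ w₂ : AddMonoidAlgebra K (Fin d → ℤ)),
      (∀ x ∈ w₁.coeff.support, ∀ y ∈ w₂.coeff.support, mu + mv < φ x + φ y) →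
      AddMonoidAlgebra.ofCoeff (Finsupp.filter (fun x => φ x = mu + mv) (w₁ * w₂).coeff) = 0 := by
    intro w₁ w₂ hw
    refine laurent_filter_eq_zero fun x hx => ?_
    obtain ⟨y, hy, z, hz, rfl⟩ := Finset.mem_add.1 (AddMonoidAlgebra.support_coeff_mul_subset w₁ w₂ hx)
    have := hw y hy z hz
    rw [map_add]
    omega
  have k1 := key cu v' (fun x hx y hy => by have := hscu x hx; have := hsv' y hy; omega)
  have k2 := key u' cv (fun x hx y hy => by have := hsu' x hx; have := hscv y hy; omega)
  have k3 := key u' v' (fun x hx y hy => by have := hsu' x hx; have := hsv' y hy; omega)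
  rw [hexp, AddMonoidAlgebra.coeff_add, AddMonoidAlgebra.coeff_add, AddMonoidAlgebra.coeff_add,
    Finsupp.filter_add, Finsupp.filter_add, Finsupp.filter_add, AddMonoidAlgebra.ofCoeff_add,
    AddMonoidAlgebra.ofCoeff_add, AddMonoidAlgebra.ofCoeff_add, k1, k2, k3]
  have hself : AddMonoidAlgebra.ofCoeff (Finsupp.filter (fun x => φ x = mu + mv) (cu * cv).coeff) = cu * cv := by
    refine laurent_filter_eq_self fun x hx => ?_
    obtain ⟨y, hy, z, hz, rfl⟩ := Finset.mem_add.1 (AddMonoidAlgebra.support_coeff_mul_subset cu cv hx)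
    rw [map_add, hscu y hy, hscv z hz]
  rw [hself]
  simp only [add_zero, zero_add]

/-- `1 - a·x^g` is irreducible when `gcd g = 1`. -/
lemma laurent_irreducible (g : Fin d → ℤ) (hg : Finset.univ.gcd g = 1)
    (a : K) (ha : a ≠ 0) :
    Irreducible ((1 : AddMonoidAlgebra K (Fin d → ℤ)) - AddMonoidAlgebra.single g a) := by
  classical
  have hg0 : g ≠ 0 := by
    rintro rfl
    have hz : (Finset.univ : Finset (Fin d)).gcd (0 : Fin d → ℤ) = 0 :=
      Finset.gcd_eq_zero_iff.2 (fun i _ => rfl)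
    rw [hz] at hg
    exact one_ne_zero hg.symm
  obtain ⟨φ, hφg⟩ := laurent_aux_exists_phi g hg
  set p : AddMonoidAlgebra K (Fin d → ℤ) := 1 - AddMonoidAlgebra.single g a with hp
  have hpdef : p = AddMonoidAlgebra.ofCoeff (Finsupp.single 0 1 - Finsupp.single g a) := rfl
  have hp0 : p.coeff 0 = 1 := by
    rw [hpdef, AddMonoidAlgebra.coeff_ofCoeff, Finsupp.sub_apply, Finsupp.single_eq_same, Finsupp.single_eq_of_ne (Ne.symm hg0), sub_zero]
  have hpg : p.coeff g = -a := by
    rw [hpdef, AddMonoidAlgebra.coeff_ofCoeff, Finsupp.sub_apply, Finsupp.single_eq_of_ne hg0, Finsupp.single_eq_same,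
      zero_sub]
  have hpne : p ≠ 0 := fun h => by simp [h] at hp0
  have h0mem : (0 : Fin d → ℤ) ∈ p.coeff.support :=
    Finsupp.mem_support_iff.2 (by rw [hp0]; exact one_ne_zero)
  have hgmem : g ∈ p.coeff.support :=
    Finsupp.mem_support_iff.2 (by rw [hpg]; exact neg_ne_zero.2 ha)
  have hsupp : ∀ x ∈ p.coeff.support, x = 0 ∨ x = g := by
    intro x hx
    by_contra hcon
    push_neg at hcon
    have : p.coeff x ≠ 0 := Finsupp.mem_support_iff.1 hx
    rw [hpdef, AddMonoidAlgebra.coeff_ofCoeff, Finsupp.sub_apply, Finsupp.single_eq_of_ne hcon.1,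
      Finsupp.single_eq_of_ne hcon.2, sub_zero] at this
    exact this rfl
  have hkey : ∀ (ψ : (Fin d → ℤ) →+ ℤ) (s : ℤ), s ≠ 0 → s ≠ ψ g →
      laurentCmp ψ s p = 0 := by
    intro ψ s hs0 hsg
    rw [laurentCmp_eq, hpdef, AddMonoidAlgebra.coeff_ofCoeff, Finsupp.filter_sub,
      Finsupp.filter_single_of_neg (fun x => ψ x = s) (by intro h; simp only [map_zero] at h; exact hs0 h.symm),
      Finsupp.filter_single_of_neg (fun x => ψ x = s) (fun h => hsg h.symm), sub_zero,
      AddMonoidAlgebra.ofCoeff_zero]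
  have hfil0 : laurentCmp φ 0 p = (1 : AddMonoidAlgebra K (Fin d → ℤ)) := by
    rw [laurentCmp_eq, hpdef, AddMonoidAlgebra.coeff_ofCoeff, Finsupp.filter_sub,
      Finsupp.filter_single_of_pos (fun x => φ x = 0) (map_zero φ),
      Finsupp.filter_single_of_neg (fun x => φ x = 0) (by intro h; simp only [hφg] at h; exact one_ne_zero h), sub_zero]
    exact AddMonoidAlgebra.one_def.symm
  have hfil1 : laurentCmp φ 1 p
      = - AddMonoidAlgebra.single g a := by
    rw [laurentCmp_eq, hpdef, AddMonoidAlgebra.coeff_ofCoeff, Finsupp.filter_sub,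
      Finsupp.filter_single_of_neg (fun x => φ x = 1) (by intro h; simp only [map_zero] at h; exact zero_ne_one h),
      Finsupp.filter_single_of_pos (fun x => φ x = 1) hφg, zero_sub,
      AddMonoidAlgebra.ofCoeff_neg, AddMonoidAlgebra.ofCoeff_single]
  have hmon : IsUnit (-(AddMonoidAlgebra.single g a : AddMonoidAlgebra K (Fin d → ℤ))) := by
    refine IsUnit.of_mul_eq_one (-(AddMonoidAlgebra.single (-g) a⁻¹)) ?_
    rw [neg_mul_neg, AddMonoidAlgebra.single_mul_single, add_neg_cancel, mul_inv_cancel₀ ha,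
      ← AddMonoidAlgebra.one_def]
  -- lo values of p
  have hlop : laurentLo φ p = 0 := by
    have h1 : laurentLo φ p ≤ 0 := by simpa using laurentLo_le φ hpne h0mem
    obtain ⟨x, hx, hφx⟩ := laurentLo_attained φ hpne
    rcases hsupp x hx with rfl | rfl
    · rw [← hφx, map_zero]
    · rw [← hφx, hφg] at h1 ⊢
      omega
  have hlop' : laurentLo (-φ) p = -1 := by
    have h1 : laurentLo (-φ) p ≤ -1 := by
      have := laurentLo_le (-φ) hpne hgmem
      simpa [hφg] using this
    obtain ⟨x, hx, hφx⟩ := laurentLo_attained (-φ) hpne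
    rcases hsupp x hx with rfl | rfl
    · rw [← hφx, map_zero] at h1 ⊢
      omega
    · rw [← hφx]
      simp [hφg]
  constructor
  · -- p is not a unit
    intro hun
    obtain ⟨q, hq⟩ := hun.exists_right_inv
    have hqne : q ≠ 0 := by
      rintro rfl
      rw [mul_zero] at hq
      exact one_ne_zero hq.symm
    have hone : (1 : AddMonoidAlgebra K (Fin d → ℤ)) ≠ 0 := one_ne_zero
    have hsum : ∀ (ψ : (Fin d → ℤ) →+ ℤ), laurentLo ψ p + laurentLo ψ q = 0 := by
      intro ψ
      have h1 : laurentCmp ψ (laurentLo ψ p + laurentLo ψ q) (p * q) ≠ 0 := by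
        rw [laurent_cmp_mul ψ hpne hqne]
        exact mul_ne_zero (laurent_cmp_ne_zero ψ hpne) (laurent_cmp_ne_zero ψ hqne)
      rw [hq] at h1
      by_contra hs
      apply h1
      rw [laurentCmp_eq, AddMonoidAlgebra.one_def, AddMonoidAlgebra.coeff_single]
      rw [Finsupp.filter_single_of_neg (fun x => ψ x = laurentLo ψ p + laurentLo ψ q)
        (by intro h; simp only [map_zero] at h; exact hs h.symm), AddMonoidAlgebra.ofCoeff_zero]
    have e1 := hsum φ
    have e2 := hsum (-φ)
    rw [hlop] at e1
    rw [hlop'] at e2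
    obtain ⟨x, hx⟩ := Finsupp.support_nonempty_iff.2 (AddMonoidAlgebra.coeff_eq_zero.not.2 hqne)
    have b1 := laurentLo_le φ hqne hx
    have b2 := laurentLo_le (-φ) hqne hx
    simp only [AddMonoidHom.neg_apply] at b2
    omega
  · -- factors
    intro u v huv
    have hune : u ≠ 0 := by rintro rfl; rw [zero_mul] at huv; exact hpne huv
    have hvne : v ≠ 0 := by rintro rfl; rw [mul_zero] at huv; exact hpne huv
    set mu := laurentLo φ u with hmud
    set mv := laurentLo φ v with hmvd
    set Mu := -laurentLo (-φ) u with hMud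
    set Mv := -laurentLo (-φ) v with hMvd
    have hbound : ∀ (w : AddMonoidAlgebra K (Fin d → ℤ)) (hw : w ≠ 0),
        ∀ x ∈ w.coeff.support, laurentLo φ w ≤ φ x ∧ φ x ≤ -laurentLo (-φ) w := by
      intro w hw x hx
      have b1 := laurentLo_le φ hw hx
      have b2 := laurentLo_le (-φ) hw hx
      simp only [AddMonoidHom.neg_apply] at b2
      omega
    have hmuMu : mu ≤ Mu := by
      obtain ⟨x, hx⟩ := Finsupp.support_nonempty_iff.2 (AddMonoidAlgebra.coeff_eq_zero.not.2 hune)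
      have := hbound u hune x hx
      omega
    have hmvMv : mv ≤ Mv := by
      obtain ⟨x, hx⟩ := Finsupp.support_nonempty_iff.2 (AddMonoidAlgebra.coeff_eq_zero.not.2 hvne)
      have := hbound v hvne x hx
      omega
    have hA : mu + mv = 0 ∨ mu + mv = 1 := by
      have h1 : laurentCmp φ (mu + mv) (u * v) ≠ 0 := by
        rw [laurent_cmp_mul φ hune hvne]
        exact mul_ne_zero (laurent_cmp_ne_zero φ hune) (laurent_cmp_ne_zero φ hvne)
      rw [← huv] at h1
      by_contra hc
      push_neg at hc
      exact h1 (hkey φ _ hc.1 (by rw [hφg]; exact hc.2))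
    have hB : Mu + Mv = 0 ∨ Mu + Mv = 1 := by
      have h1 : laurentCmp (-φ) (laurentLo (-φ) u + laurentLo (-φ) v) (u * v) ≠ 0 := by
        rw [laurent_cmp_mul (-φ) hune hvne]
        exact mul_ne_zero (laurent_cmp_ne_zero (-φ) hune) (laurent_cmp_ne_zero (-φ) hvne)
      rw [← huv] at h1
      by_contra hc
      push_neg at hc
      refine h1 (hkey (-φ) _ ?_ ?_)
      · intro h; apply hc.1; rw [hMud, hMvd]; omega
      · simp only [AddMonoidHom.neg_apply, hφg]
        intro h; apply hc.2; rw [hMud, hMvd]; omega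
    have hcase : Mu = mu ∨ Mv = mv := by omega
    rcases hcase with hcM | hcM
    · -- u is concentrated in a single fiber, hence a unit
      left
      have hufib : ∀ x ∈ u.coeff.support, φ x = mu := by
        intro x hx
        have := hbound u hune x hx
        omega
      have hufil : laurentCmp φ mu u = u := by
        rw [laurentCmp_eq]; exact laurent_filter_eq_self hufib
      have hcm := laurent_cmp_mul φ hune hvne
      rw [← hmud, ← hmvd, hufil, ← huv] at hcm
      rcases hA with h01 | h01 <;> rw [h01] at hcm
      · rw [hfil0] at hcm
        exact IsUnit.of_mul_eq_one _ hcm.symm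
      · rw [hfil1] at hcm
        exact isUnit_of_dvd_unit (Dvd.intro _ hcm.symm) hmon
    · -- v is concentrated in a single fiber, hence a unit
      right
      have hvfib : ∀ x ∈ v.coeff.support, φ x = mv := by
        intro x hx
        have := hbound v hvne x hx
        omega
      have hvfil : laurentCmp φ mv v = v := by
        rw [laurentCmp_eq]; exact laurent_filter_eq_self hvfib
      have hcm := laurent_cmp_mul φ hune hvne
      rw [← hmud, ← hmvd, hvfil, ← huv] at hcm
      rcases hA with h01 | h01 <;> rw [h01] at hcm
      · rw [hfil0] at hcm
        exact IsUnit.of_mul_eq_one _ (by rw [mul_comm] at hcm; exact hcm.symm)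
      · rw [hfil1] at hcm
        exact isUnit_of_dvd_unit (Dvd.intro_left _ hcm.symm) hmon

end Aux

/-- **Lemma (factorization of `1 − c·x^e` in the Laurent polynomial ring `K[ℤ^d]`).**
With `t = gcd(e₁,…,e_d)`, `ζ` a primitive `t`-th root of unity and `b^t = c`, one has
`1 − c·x^e = Π_{j=1}^t (1 − ζ^j b·x^{e/t})`, each factor is irreducible, and `1 − c·x^e`
is irreducible iff `t = 1`. -/
theorem laurent_one_sub_monomial_factorization {K : Type*} [Field K] [IsAlgClosed K]
    [CharZero K] {d : ℕ} (e : Fin d → ℤ) (he : e ≠ 0) (t : ℕ)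
    (ht : (t : ℤ) = Finset.univ.gcd e)
    (c : K) (hc : c ≠ 0) (ζ : K) (hζ : IsPrimitiveRoot ζ t)
    (b : K) (hb0 : b ≠ 0) (hb : b ^ t = c) :
    ((1 : AddMonoidAlgebra K (Fin d → ℤ)) - AddMonoidAlgebra.single e c =
      ∏ j ∈ Finset.range t,
        (1 - AddMonoidAlgebra.single (fun i => e i / (t : ℤ)) (ζ ^ (j + 1) * b))) ∧
    (∀ j : ℕ, Irreducible
      ((1 : AddMonoidAlgebra K (Fin d → ℤ)) -
        AddMonoidAlgebra.single (fun i => e i / (t : ℤ)) (ζ ^ j * b))) ∧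
    (Irreducible ((1 : AddMonoidAlgebra K (Fin d → ℤ)) - AddMonoidAlgebra.single e c) ↔
      t = 1) := by
  classical
  have htne : t ≠ 0 := by
    rintro rfl
    simp only [Nat.cast_zero] at ht
    exact he (funext fun i => Finset.gcd_eq_zero_iff.1 ht.symm i (Finset.mem_univ i))
  have tpos : 0 < t := Nat.pos_of_ne_zero htne
  set f : Fin d → ℤ := fun i => e i / (t : ℤ) with hf
  have hdvd : ∀ i, (t : ℤ) ∣ e i := fun i => ht ▸ Finset.gcd_dvd (Finset.mem_univ i)
  have hef : ∀ i, (t : ℤ) * f i = e i := fun i => Int.mul_ediv_cancel' (hdvd i)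
  have hsm : t • f = e := by
    funext i
    rw [Pi.smul_apply, nsmul_eq_mul]
    exact hef i
  have hfne : f ≠ 0 := by
    intro h
    apply he
    rw [← hsm, h, smul_zero]
  have hgcdf : Finset.univ.gcd f = 1 := by
    have h1 : Finset.univ.gcd e = Finset.univ.gcd (fun i => (t : ℤ) * f i) :=
      Finset.gcd_congr rfl fun i _ => (hef i).symm
    rw [Finset.gcd_mul_left, Int.normalize_of_nonneg (by positivity)] at h1
    have h2 : (t : ℤ) * 1 = (t : ℤ) * Finset.univ.gcd f := by
      rw [mul_one]; conv_lhs => rw [ht, h1]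
    exact (mul_left_cancel₀ (by exact_mod_cast htne) h2).symm
  have hζne : ζ ≠ 0 := hζ.ne_zero htne
  have part2 : ∀ j : ℕ, Irreducible ((1 : AddMonoidAlgebra K (Fin d → ℤ)) -
      AddMonoidAlgebra.single f (ζ ^ j * b)) :=
    fun j => laurent_irreducible f hgcdf _ (mul_ne_zero (pow_ne_zero j hζne) hb0)
  -- the factorization
  set Z : AddMonoidAlgebra K (Fin d → ℤ) := AddMonoidAlgebra.single (-f) b⁻¹ with hZdef
  have himg : (Finset.range t).image (fun j => ζ ^ j) = Polynomial.nthRootsFinset t (1 : K) := by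
    apply Finset.eq_of_subset_of_card_le
    · intro z hz
      rw [Finset.mem_image] at hz
      obtain ⟨j, _, rfl⟩ := hz
      rw [Polynomial.mem_nthRootsFinset tpos, ← pow_mul, mul_comm, pow_mul, hζ.pow_eq_one,
        one_pow]
    · rw [hζ.card_nthRootsFinset, Finset.card_image_of_injOn fun i hi j hj hij =>
        hζ.pow_inj (Finset.mem_range.1 hi) (Finset.mem_range.1 hj) hij, Finset.card_range]
  have hXprod : (Polynomial.X : Polynomial K) ^ t - 1
      = ∏ j ∈ Finset.range t, (Polynomial.X - Polynomial.C (ζ ^ j)) := by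
    rw [Polynomial.X_pow_sub_one_eq_prod tpos hζ, ← himg,
      Finset.prod_image (fun i hi j hj hij =>
        hζ.pow_inj (Finset.mem_range.1 hi) (Finset.mem_range.1 hj) hij)]
  have hZeq := congrArg (Polynomial.aeval Z) hXprod
  simp only [map_sub, map_pow, map_one, map_prod, Polynomial.aeval_X, Polynomial.aeval_C] at hZeq
  simp only [← map_pow] at hZeq
  have halg : ∀ k : K, algebraMap K (AddMonoidAlgebra K (Fin d → ℤ)) k
      = AddMonoidAlgebra.single 0 k := fun k => rfl
  have hfac : ∀ j : ℕ, (AddMonoidAlgebra.single f b :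
        AddMonoidAlgebra K (Fin d → ℤ)) * (Z - algebraMap K (AddMonoidAlgebra K (Fin d → ℤ)) (ζ ^ j))
      = (1 : AddMonoidAlgebra K (Fin d → ℤ)) - AddMonoidAlgebra.single f (ζ ^ j * b) := by
    intro j
    rw [mul_sub, hZdef, AddMonoidAlgebra.single_mul_single, add_neg_cancel,
      mul_inv_cancel₀ hb0, ← AddMonoidAlgebra.one_def, halg,
      AddMonoidAlgebra.single_mul_single, add_zero, mul_comm b (ζ ^ j)]
  have hsingle_pow : (AddMonoidAlgebra.single f b : AddMonoidAlgebra K (Fin d → ℤ)) ^ t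
      = AddMonoidAlgebra.single e c := by
    rw [AddMonoidAlgebra.single_pow, hsm, hb]
  have hZt : AddMonoidAlgebra.single e c * Z ^ t = 1 := by
    rw [hZdef, AddMonoidAlgebra.single_pow, smul_neg, hsm, AddMonoidAlgebra.single_mul_single,
      add_neg_cancel, inv_pow, hb, mul_inv_cancel₀ hc, ← AddMonoidAlgebra.one_def]
  have key : (1 : AddMonoidAlgebra K (Fin d → ℤ)) - AddMonoidAlgebra.single e c
      = ∏ j ∈ Finset.range t,
          ((1 : AddMonoidAlgebra K (Fin d → ℤ)) - AddMonoidAlgebra.single f (ζ ^ j * b)) := by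
    calc (1 : AddMonoidAlgebra K (Fin d → ℤ)) - AddMonoidAlgebra.single e c
        = AddMonoidAlgebra.single e c * (Z ^ t - 1) := by
          rw [mul_sub, hZt, mul_one]
      _ = (AddMonoidAlgebra.single f b : AddMonoidAlgebra K (Fin d → ℤ)) ^ t
            * ∏ j ∈ Finset.range t, (Z - algebraMap K (AddMonoidAlgebra K (Fin d → ℤ)) (ζ ^ j)) := by
          rw [hsingle_pow, hZeq]
      _ = ∏ j ∈ Finset.range t, ((AddMonoidAlgebra.single f b : AddMonoidAlgebra K (Fin d → ℤ))
            * (Z - algebraMap K (AddMonoidAlgebra K (Fin d → ℤ)) (ζ ^ j))) := by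
          rw [Finset.prod_mul_distrib, Finset.prod_const, Finset.card_range]
      _ = _ := Finset.prod_congr rfl fun j _ => hfac j
  have hre : ∏ j ∈ Finset.range t,
        ((1 : AddMonoidAlgebra K (Fin d → ℤ)) - AddMonoidAlgebra.single f (ζ ^ (j + 1) * b))
      = ∏ j ∈ Finset.range t,
        ((1 : AddMonoidAlgebra K (Fin d → ℤ)) - AddMonoidAlgebra.single f (ζ ^ j * b)) := by
    set F : ℕ → AddMonoidAlgebra K (Fin d → ℤ) :=
      fun j => 1 - AddMonoidAlgebra.single f (ζ ^ j * b) with hF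
    have hcoe : (F 0).coeff 0 = 1 := by
      show ((1 : AddMonoidAlgebra K (Fin d → ℤ)) - AddMonoidAlgebra.single f (ζ ^ 0 * b)).coeff 0 = 1
      rw [AddMonoidAlgebra.one_def]
      show (Finsupp.single (0 : Fin d → ℤ) (1 : K) - Finsupp.single f (ζ ^ 0 * b)) 0 = 1
      rw [Finsupp.sub_apply, Finsupp.single_eq_same, Finsupp.single_eq_of_ne (Ne.symm hfne), sub_zero]
    have hF0ne : F 0 ≠ 0 := by
      intro h
      rw [h] at hcoe
      simp at hcoe
    have hFt : F t = F 0 := by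
      show (1 : AddMonoidAlgebra K (Fin d → ℤ)) - AddMonoidAlgebra.single f (ζ ^ t * b)
        = 1 - AddMonoidAlgebra.single f (ζ ^ 0 * b)
      rw [hζ.pow_eq_one, pow_zero]
    refine mul_right_cancel₀ hF0ne ?_
    show (∏ j ∈ Finset.range t, F (j + 1)) * F 0 = (∏ j ∈ Finset.range t, F j) * F 0
    calc (∏ j ∈ Finset.range t, F (j + 1)) * F 0
        = ∏ j ∈ Finset.range (t + 1), F j := (Finset.prod_range_succ' F t).symm
      _ = (∏ j ∈ Finset.range t, F j) * F t := Finset.prod_range_succ F t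
      _ = (∏ j ∈ Finset.range t, F j) * F 0 := by rw [hFt]
  have hfact : (1 : AddMonoidAlgebra K (Fin d → ℤ)) - AddMonoidAlgebra.single e c
      = ∏ j ∈ Finset.range t,
          ((1 : AddMonoidAlgebra K (Fin d → ℤ)) - AddMonoidAlgebra.single f (ζ ^ (j + 1) * b)) :=
    key.trans hre.symm
  refine ⟨hfact, part2, ?_, ?_⟩
  · intro hirr
    by_contra htne1
    have ht2 : 2 ≤ t := by omega
    have h0 : (0 : ℕ) ∈ Finset.range t := Finset.mem_range.2 (by omega)
    rw [Finset.prod_eq_mul_prod_sdiff_singleton_of_mem h0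
      (fun j => (1 : AddMonoidAlgebra K (Fin d → ℤ))
        - AddMonoidAlgebra.single f (ζ ^ (j + 1) * b))] at hfact
    rcases hirr.isUnit_or_isUnit hfact with h | h
    · exact (part2 1).not_isUnit (by simpa using h)
    · have h1mem : (1 : ℕ) ∈ Finset.range t \ {0} := by
        simp only [Finset.mem_sdiff, Finset.mem_range, Finset.mem_singleton]
        omega
      have hdvd2 : ((1 : AddMonoidAlgebra K (Fin d → ℤ))
          - AddMonoidAlgebra.single f (ζ ^ 2 * b)) ∣
          ∏ j ∈ Finset.range t \ {0},
            ((1 : AddMonoidAlgebra K (Fin d → ℤ))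
              - AddMonoidAlgebra.single f (ζ ^ (j + 1) * b)) := by
        have := Finset.dvd_prod_of_mem
          (fun j => (1 : AddMonoidAlgebra K (Fin d → ℤ))
            - AddMonoidAlgebra.single f (ζ ^ (j + 1) * b)) h1mem
        norm_num at this ⊢
        exact this
      exact (part2 2).not_isUnit (isUnit_of_dvd_unit hdvd2 h)
  · intro ht1
    subst ht1
    have : Finset.univ.gcd e = 1 := by exact_mod_cast ht.symm
    exact laurent_irreducible e this c hc
end

section
/- Let K be a field of characteristic 0, let e₁,…,e_n ∈ ℕ^d, let c₁,…,c_n ∈ K^×, and let m₁,…,m_n ≥ 1 be integers. Then the following are equivalent: (a) the vectors e₁,…,e_n are linearly independent over ℤ; (b) the monomials x^{e₁},…,x^{e_n} ∈ K[x₁,…,x_d] are algebraically independent over K; (c) the polynomials (1 − c₁x^{e₁})^{m₁},…,(1 − c_nx^{e_n})^{m_n} ∈ K[x₁,…,x_d] are algebraically independent over K. -/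
open MvPolynomial Finset

namespace MonoIndepAux

variable {K : Type*} [Field K] {d n : ℕ}

lemma prod_monomial_one (s : Finset (Fin n)) (a : Fin n → (Fin d →₀ ℕ)) :
    (∏ j ∈ s, monomial (a j) (1:K)) = monomial (∑ j ∈ s, a j) 1 := by
  classical
  induction s using Finset.induction_on with
  | empty => simp [monomial_zero']
  | insert _ _ hj ih =>
      rw [Finset.prod_insert hj, ih, monomial_mul, one_mul, Finset.sum_insert hj]

lemma aeval_monomial_eq (e : Fin n → (Fin d →₀ ℕ)) (β : Fin n →₀ ℕ) (c : K) :
    aeval (fun j => monomial (e j) (1:K)) (monomial β c)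
      = monomial (∑ j, β j • e j) c := by
  rw [aeval_monomial, Finsupp.prod_fintype _ _ (fun j => pow_zero _)]
  simp_rw [monomial_pow, one_pow]
  rw [prod_monomial_one, algebraMap_eq, C_mul_monomial, mul_one]

lemma sum_smul_apply (e : Fin n → (Fin d →₀ ℕ)) (β : Fin n → ℕ) (i : Fin d) :
    (∑ j, β j • e j) i = ∑ j, β j * e j i := by
  rw [Finsupp.finset_sum_apply]
  simp

lemma expmap_injective (e : Fin n → (Fin d →₀ ℕ))
    (ha : LinearIndependent ℤ (fun j : Fin n => fun i : Fin d => (e j i : ℤ)))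
    {β γ : Fin n →₀ ℕ} (h : (∑ j, β j • e j) = ∑ j, γ j • e j) : β = γ := by
  rw [Fintype.linearIndependent_iff] at ha
  set g : Fin n → ℤ := fun j => (β j : ℤ) - γ j with hgdef
  have h0 : ∑ j, g j • (fun i : Fin d => (e j i : ℤ)) = 0 := by
    funext i
    have h2 : ((∑ j, β j • e j) i : ℤ) = ((∑ j, γ j • e j) i : ℤ) := by rw [h]
    rw [sum_smul_apply, sum_smul_apply] at h2
    push_cast at h2
    simp only [Finset.sum_apply, Pi.smul_apply, smul_eq_mul, Pi.zero_apply, hgdef]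
    simp only [sub_mul]
    rw [Finset.sum_sub_distrib, h2, sub_self]
  have hz := ha g h0
  ext j
  have := hz j
  simp only [hgdef] at this
  omega

lemma aToB (e : Fin n → (Fin d →₀ ℕ))
    (ha : LinearIndependent ℤ (fun j : Fin n => fun i : Fin d => (e j i : ℤ))) :
    AlgebraicIndependent K (fun j : Fin n => monomial (e j) (1 : K)) := by
  rw [algebraicIndependent_iff_injective_aeval, injective_iff_map_eq_zero]
  intro P hP
  by_contra hP0
  obtain ⟨β0, hβ0⟩ := support_nonempty.2 hP0
  have hexp : aeval (fun j => monomial (e j) (1:K)) P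
      = ∑ β ∈ P.support, monomial (∑ j, β j • e j) (coeff β P) := by
    conv_lhs => rw [P.as_sum]
    rw [map_sum]
    exact Finset.sum_congr rfl fun β _ => aeval_monomial_eq e β _
  have hco : coeff (∑ j, β0 j • e j) (aeval (fun j => monomial (e j) (1:K)) P)
      = coeff β0 P := by
    rw [hexp, coeff_sum, Finset.sum_eq_single β0]
    · rw [coeff_monomial, if_pos rfl]
    · intro β hβ hne
      rw [coeff_monomial, if_neg (fun hEq => hne (expmap_injective e ha hEq))]
    · intro h; exact absurd hβ0 h
  rw [hP] at hco
  simp only [coeff_zero] at hco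
  exact (mem_support_iff.1 hβ0) hco.symm

lemma reduce (e : Fin n → (Fin d →₀ ℕ)) (z : Fin n → ℤ)
    (hz' : (∑ j, (z j).toNat • e j) = ∑ j, (- z j).toNat • e j)
    (hpos : ∃ j0, 0 < z j0) :
    ∀ (N : ℕ) (β : Fin n → ℕ), (∑ j, if 0 < z j then β j else 0) ≤ N →
      ∃ β' : Fin n → ℕ, ((∑ j, β' j • e j) = ∑ j, β j • e j) ∧
        ∃ j0, 0 < z j0 ∧ β' j0 < (z j0).toNat := by
  intro N
  induction N with
  | zero =>
      intro β hβ
      by_cases hred : ∃ j0, 0 < z j0 ∧ β j0 < (z j0).toNat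
      · exact ⟨β, rfl, hred⟩
      · exfalso
        push_neg at hred
        obtain ⟨j0, hj0⟩ := hpos
        have h1 : (z j0).toNat ≤ β j0 := hred j0 hj0
        have h2 : β j0 ≤ ∑ j, if 0 < z j then β j else 0 := by
          calc β j0 = (if 0 < z j0 then β j0 else 0) := by rw [if_pos hj0]
          _ ≤ ∑ j, if 0 < z j then β j else 0 :=
            Finset.single_le_sum (f := fun j => if 0 < z j then β j else 0)
              (fun _ _ => Nat.zero_le _) (mem_univ j0)
        omega
  | succ N ih =>
      intro β hβ
      by_cases hred : ∃ j0, 0 < z j0 ∧ β j0 < (z j0).toNat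
      · exact ⟨β, rfl, hred⟩
      · push_neg at hred
        set γ : Fin n → ℕ := fun j => β j - (z j).toNat + (- z j).toNat with hγ
        have hsum : (∑ j, γ j • e j) = ∑ j, β j • e j := by
          have h1 : ∀ j, γ j • e j = (β j - (z j).toNat) • e j + (- z j).toNat • e j :=
            fun j => by rw [hγ, add_smul]
          rw [Finset.sum_congr rfl (fun j _ => h1 j), Finset.sum_add_distrib, ← hz',
            ← Finset.sum_add_distrib]
          refine Finset.sum_congr rfl fun j _ => ?_
          rw [← add_smul]
          congr 1
          by_cases h : 0 < z j
          · have := hred j h; omega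
          · omega
        have hmeas : (∑ j, if 0 < z j then γ j else 0) ≤ N := by
          obtain ⟨j0, hj0⟩ := hpos
          have hlt : (∑ j, if 0 < z j then γ j else 0)
              < ∑ j, if 0 < z j then β j else 0 := by
            apply Finset.sum_lt_sum
            · intro j _
              by_cases h : 0 < z j
              · simp only [if_pos h, hγ]
                have h2 := hred j h
                omega
              · simp [if_neg h]
            · refine ⟨j0, mem_univ j0, ?_⟩
              rw [if_pos hj0, if_pos hj0]
              have h2 := hred j0 hj0
              simp only [hγ]
              omega
          omega
        obtain ⟨β', h1, h2⟩ := ih γ hmeas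
        exact ⟨β', h1.trans hsum, h2⟩

lemma red_card (z : Fin n → ℤ) (T : ℕ) :
    ((Fintype.piFinset fun _ : Fin n => Finset.range (T+1)).filter
      (fun β => ∃ j0, 0 < z j0 ∧ β j0 < (z j0).toNat)).card
      ≤ (∑ j, (z j).toNat) * (T+1)^(n-1) := by
  classical
  have hsub : ((Fintype.piFinset fun _ : Fin n => Finset.range (T+1)).filter
      (fun β => ∃ j0, 0 < z j0 ∧ β j0 < (z j0).toNat))
      ⊆ Finset.univ.biUnion (fun j0 : Fin n =>
        Fintype.piFinset fun j => Finset.range (if j = j0 then (z j0).toNat else T+1)) := by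
    intro β hβ
    rw [Finset.mem_filter] at hβ
    obtain ⟨hβ1, j0, hj1, hj2⟩ := hβ
    refine Finset.mem_biUnion.2 ⟨j0, mem_univ _, ?_⟩
    rw [Fintype.mem_piFinset] at hβ1 ⊢
    intro j
    by_cases h : j = j0
    · subst h; rw [if_pos rfl, Finset.mem_range]; exact hj2
    · rw [if_neg h]; exact hβ1 j
  refine (Finset.card_le_card hsub).trans (Finset.card_biUnion_le.trans ?_)
  have hpiece : ∀ j0 : Fin n,
      (Fintype.piFinset fun j => Finset.range (if j = j0 then (z j0).toNat else T+1)).card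
        = (z j0).toNat * (T+1)^(n-1) := by
    intro j0
    rw [Fintype.card_piFinset]
    simp_rw [Finset.card_range]
    rw [← Finset.mul_prod_erase univ _ (mem_univ j0), if_pos rfl]
    congr 1
    rw [Finset.prod_congr rfl (fun j hj => if_neg (Finset.ne_of_mem_erase hj)),
      Finset.prod_const, Finset.card_erase_of_mem (mem_univ j0), Finset.card_univ,
      Fintype.card_fin]
  rw [Finset.sum_congr rfl (fun j0 _ => hpiece j0), ← Finset.sum_mul]

lemma card_le_of_span {M : Type*} [AddCommGroup M] [Module K M] {ι : Type*} [Fintype ι]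
    {f : ι → M} (hf : LinearIndependent K f) (S : Finset M)
    (hmem : ∀ i, f i ∈ Submodule.span K (S : Set M)) :
    Fintype.card ι ≤ S.card := by
  classical
  set W := Submodule.span K (S : Set M) with hW
  haveI : FiniteDimensional K W := FiniteDimensional.span_finset K S
  have hf' : LinearIndependent K (fun i => (⟨f i, hmem i⟩ : W)) :=
    LinearIndependent.of_comp W.subtype (by exact hf)
  calc Fintype.card ι ≤ Module.finrank K W := hf'.fintype_card_le_finrank
  _ ≤ S.card := by
      simpa [Set.finrank, hW] using finrank_span_finset_le_card (R := K) S

lemma not_algIndep (e : Fin n → (Fin d →₀ ℕ)) (he : ∀ j, e j ≠ 0)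
    (z : Fin n → ℤ) (hpos : ∃ j0, 0 < z j0)
    (hz : ∑ j, z j • (fun i : Fin d => (e j i : ℤ)) = 0)
    (F : Fin n → MvPolynomial (Fin n) K) :
    ¬ AlgebraicIndependent K
      (fun j => aeval (fun j' => monomial (e j') (1:K)) (F j)) := by
  classical
  intro hAI
  set v : Fin n → MvPolynomial (Fin d) K := fun j' => monomial (e j') (1:K) with hv
  set u : Fin n → MvPolynomial (Fin d) K := fun j => aeval v (F j) with hu
  have hz' : (∑ j, (z j).toNat • e j) = ∑ j, (- z j).toNat • e j := by
    ext i
    rw [Finsupp.finset_sum_apply, Finsupp.finset_sum_apply]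
    simp only [Finsupp.smul_apply, smul_eq_mul]
    have h2 : ∑ j, z j * (e j i : ℤ) = 0 := by
      have h3 := congrFun hz i
      simpa [Finset.sum_apply, Pi.smul_apply, smul_eq_mul] using h3
    have h4 : (↑(∑ j, (z j).toNat * e j i) : ℤ) = ↑(∑ j, (-z j).toNat * e j i) := by
      push_cast
      rw [← sub_eq_zero, ← Finset.sum_sub_distrib, ← h2]
      refine Finset.sum_congr rfl fun j _ => ?_
      have h5 : ((z j).toNat : ℤ) - ((-z j).toNat : ℤ) = z j := by omega
      rw [← sub_mul, h5]
    exact_mod_cast h4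
  have hdeg : ∀ j, 1 ≤ ∑ i, e j i := by
    intro j
    by_contra h
    push_neg at h
    have h0 : ∀ i, e j i = 0 := by
      intro i
      have hsum0 : ∑ i, e j i = 0 := by omega
      exact Finset.sum_eq_zero_iff.1 hsum0 i (mem_univ i)
    exact he j (Finsupp.ext fun i => h0 i)
  set Dm := ∑ j, (F j).totalDegree with hDm
  set E := ∑ j, ∑ i, e j i with hE
  set B := Dm * E + 1 with hB
  set Zs := ∑ j, (z j).toNat with hZs
  set s := Zs * B^(n-1) with hs
  set Red : Finset (Fin n → ℕ) :=
    (Fintype.piFinset fun _ : Fin n => Finset.range (s*B+1)).filter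
      (fun β => ∃ j0, 0 < z j0 ∧ β j0 < (z j0).toNat) with hRed
  set S : Finset (MvPolynomial (Fin d) K) :=
    Red.image (fun β => monomial (∑ j, β j • e j) (1:K)) with hS
  set g : (Fin n → Fin (s+1)) → MvPolynomial (Fin d) K :=
    fun α => ∏ j, u j ^ (α j : ℕ) with hg
  -- linear independence of g
  have hginj : LinearIndependent K g := by
    have hbase : LinearIndependent K
        (fun b : (Fin n →₀ ℕ) => (monomial b (1:K) : MvPolynomial (Fin n) K)) := by
      have h6 := (basisMonomials (Fin n) K).linearIndependent
      rwa [coe_basisMonomials] at h6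
    have hw : Function.Injective
        (fun α : Fin n → Fin (s+1) => (Finsupp.equivFunOnFinite.symm (fun j => (α j : ℕ)))) := by
      intro α α' hαα
      have h7 := congrArg Finsupp.equivFunOnFinite hαα
      simp only [Equiv.apply_symm_apply] at h7
      funext j
      exact Fin.val_injective (congrFun h7 j)
    have hker : LinearMap.ker (aeval (R := K) u).toLinearMap = ⊥ := by
      rw [LinearMap.ker_eq_bot]
      exact algebraicIndependent_iff_injective_aeval.1 hAI
    have h8 := (hbase.comp _ hw).map' (aeval (R := K) u).toLinearMap hker
    have h9 : (⇑(aeval (R := K) u).toLinearMap ∘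
        ((fun b : (Fin n →₀ ℕ) => (monomial b (1:K) : MvPolynomial (Fin n) K)) ∘
          (fun α : Fin n → Fin (s+1) => Finsupp.equivFunOnFinite.symm (fun j => (α j : ℕ))))) = g := by
      funext α
      simp only [Function.comp_apply, AlgHom.toLinearMap_apply, hg]
      rw [aeval_monomial, Finsupp.prod_fintype _ _ (fun j => pow_zero _), map_one, one_mul]
      refine Finset.prod_congr rfl fun j _ => ?_
      rw [Finsupp.coe_equivFunOnFinite_symm]
    rwa [h9] at h8
  -- membership in span
  have hmem : ∀ α, g α ∈ Submodule.span K (S : Set (MvPolynomial (Fin d) K)) := by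
    intro α
    set P : MvPolynomial (Fin n) K := ∏ j, (F j)^(α j : ℕ) with hP
    have hgP : g α = aeval v P := by
      rw [hP, map_prod]
      exact Finset.prod_congr rfl fun j _ => by rw [map_pow]
    have htd : P.totalDegree ≤ s * Dm := by
      calc P.totalDegree ≤ ∑ j, ((F j)^(α j : ℕ)).totalDegree := totalDegree_finset_prod _ _
      _ ≤ ∑ j, (α j : ℕ) * (F j).totalDegree :=
          Finset.sum_le_sum fun j _ => totalDegree_pow _ _
      _ ≤ ∑ j, s * (F j).totalDegree :=
          Finset.sum_le_sum fun j _ => Nat.mul_le_mul_right _ (Fin.is_le _)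
      _ = s * Dm := by rw [hDm, Finset.mul_sum]
    have hPsum : aeval v P = ∑ β ∈ P.support, monomial (∑ j, β j • e j) (coeff β P) := by
      conv_lhs => rw [P.as_sum]
      rw [map_sum]
      exact Finset.sum_congr rfl fun β _ => aeval_monomial_eq e β _
    rw [hgP, hPsum]
    refine Submodule.sum_mem _ fun β hβ => ?_
    have hβbound : ∀ j, β j ≤ s * Dm := by
      intro j
      have h1 : β j ≤ β.sum fun _ k => k := by
        by_cases hj : j ∈ β.support
        · exact Finset.single_le_sum (f := fun j' => β j') (fun _ _ => Nat.zero_le _) hj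
        · simp [Finsupp.notMem_support_iff.1 hj]
      exact h1.trans ((le_totalDegree hβ).trans htd)
    obtain ⟨β', hβ'sum, hβ'red⟩ := reduce e z hz' hpos
      (∑ j, if 0 < z j then (β : Fin n → ℕ) j else 0) (⇑β) le_rfl
    have hb1 : ∑ j, β' j * (∑ i, e j i) = ∑ j, β j * (∑ i, e j i) := by
      have h10 := congrArg (fun w : (Fin d →₀ ℕ) => ∑ i, w i) hβ'sum
      simp only [sum_smul_apply] at h10
      rw [Finset.sum_comm] at h10
      rw [(Finset.sum_comm : ∑ i, ∑ j, (β : Fin n → ℕ) j * e j i = _)] at h10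
      simpa [Finset.mul_sum] using h10
    have hβ'bound : ∀ j, β' j < s * B + 1 := by
      intro j
      have h1 : β' j * 1 ≤ β' j * (∑ i, e j i) := Nat.mul_le_mul_left _ (hdeg j)
      have h2 : β' j * (∑ i, e j i) ≤ ∑ j', β' j' * (∑ i, e j' i) :=
        Finset.single_le_sum (f := fun j' => β' j' * (∑ i, e j' i))
          (fun _ _ => Nat.zero_le _) (mem_univ j)
      have h3 : ∑ j', (β : Fin n → ℕ) j' * (∑ i, e j' i) ≤ ∑ j', (s * Dm) * (∑ i, e j' i) :=
        Finset.sum_le_sum fun j' _ => Nat.mul_le_mul_right _ (hβbound j')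
      have h4 : ∑ j', (s*Dm) * (∑ i, e j' i) = s * Dm * E := by rw [hE, ← Finset.mul_sum]
      have h5 : s * Dm * E ≤ s * B := by
        rw [hB, mul_assoc]
        exact Nat.mul_le_mul_left s (Nat.le_succ _)
      omega
    have hβ'mem : β' ∈ Red := by
      rw [hRed, Finset.mem_filter]
      exact ⟨Fintype.mem_piFinset.2 fun j => Finset.mem_range.2 (hβ'bound j), hβ'red⟩
    have h11 : monomial (∑ j, β j • e j) (coeff β P)
        = (coeff β P) • monomial (∑ j, β' j • e j) (1:K) := by
      rw [smul_monomial, smul_eq_mul, mul_one, hβ'sum]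
    rw [h11]
    exact Submodule.smul_mem _ _
      (Submodule.subset_span (Finset.mem_coe.2 (Finset.mem_image_of_mem _ hβ'mem)))
  -- counting
  have hcard := card_le_of_span hginj S hmem
  rw [Fintype.card_fun, Fintype.card_fin, Fintype.card_fin] at hcard
  have h1 : S.card ≤ Red.card := Finset.card_image_le
  have h2 := red_card z (s*B)
  rw [← hRed] at h2
  obtain ⟨j0, hj0⟩ := hpos
  have hn : 1 ≤ n := j0.pos
  have hB1 : 1 ≤ B := by omega
  have hstep : (s+1)^n ≤ Zs * ((s+1)*B)^(n-1) := by
    refine hcard.trans (h1.trans (h2.trans ?_))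
    refine Nat.mul_le_mul_left _ (Nat.pow_le_pow_left ?_ _)
    nlinarith
  have hpow : ((s+1)*B)^(n-1) = (s+1)^(n-1) * B^(n-1) := mul_pow _ _ _
  rw [hpow] at hstep
  have hsn : (s+1)^n = (s+1)^(n-1) * (s+1) := by
    rw [← pow_succ]
    congr 1
    omega
  rw [hsn] at hstep
  have hre : Zs * ((s+1)^(n-1) * B^(n-1)) = (s+1)^(n-1) * (Zs * B^(n-1)) := by ring
  rw [hre] at hstep
  have hpos' : 0 < (s+1)^(n-1) := pow_pos (by omega) _
  have hfinal : s + 1 ≤ Zs * B^(n-1) := Nat.le_of_mul_le_mul_left hstep hpos'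
  rw [← hs] at hfinal
  omega

end MonoIndepAux


open MonoIndepAux in
/-- **Lemma (independence of monomials).** For `e₁, …, e_n ∈ ℕ^d`, `c₁, …, c_n ∈ Kˣ`
and `m₁, …, m_n ≥ 1`, the following are equivalent: (a) `e₁, …, e_n` are linearly
independent over `ℤ`; (b) the monomials `x^{e₁}, …, x^{e_n}` are algebraically independent
over `K`; (c) the polynomials `(1 − c₁x^{e₁})^{m₁}, …, (1 − c_nx^{e_n})^{m_n}` are
algebraically independent over `K`. -/
theorem monomial_independence_tfae {K : Type*} [Field K] [CharZero K] {d n : ℕ}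
    (e : Fin n → (Fin d →₀ ℕ)) (c : Fin n → Kˣ) (m : Fin n → ℕ) (hm : ∀ j, 1 ≤ m j) :
    (LinearIndependent ℤ (fun j : Fin n => fun i : Fin d => (e j i : ℤ)) ↔
      AlgebraicIndependent K (fun j : Fin n => MvPolynomial.monomial (e j) (1 : K))) ∧
    (AlgebraicIndependent K (fun j : Fin n => MvPolynomial.monomial (e j) (1 : K)) ↔
      AlgebraicIndependent K
        (fun j : Fin n =>
          ((1 : MvPolynomial (Fin d) K) - MvPolynomial.monomial (e j) ((c j : K))) ^ m j)) := by
  classical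
  by_cases he : ∀ j, e j ≠ 0
  · -- helper: from ¬(a), get a suitable integer relation and contradict alg independence
    have key : ∀ (F : Fin n → MvPolynomial (Fin n) K),
        ¬ LinearIndependent ℤ (fun j : Fin n => fun i : Fin d => (e j i : ℤ)) →
        ¬ AlgebraicIndependent K
          (fun j => MvPolynomial.aeval (fun j' => monomial (e j') (1:K)) (F j)) := by
      intro F hna
      rw [Fintype.not_linearIndependent_iff] at hna
      obtain ⟨z0, hz0, j1, hj1⟩ := hna
      rcases lt_or_gt_of_ne hj1 with hneg | hposj
      · refine not_algIndep e he (fun j => - z0 j) ⟨j1, show (0:ℤ) < - z0 j1 by omega⟩ ?_ F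
        have : ∑ j, (- z0 j) • (fun i : Fin d => (e j i : ℤ))
            = - ∑ j, z0 j • (fun i : Fin d => (e j i : ℤ)) := by
          rw [← Finset.sum_neg_distrib]
          exact Finset.sum_congr rfl fun j _ => by rw [neg_smul]
        rw [this, hz0, neg_zero]
      · exact not_algIndep e he z0 ⟨j1, hposj⟩ hz0 F
    have hBfam : (fun j => MvPolynomial.aeval (fun j' => monomial (e j') (1:K))
        ((X j : MvPolynomial (Fin n) K)))
        = (fun j : Fin n => MvPolynomial.monomial (e j) (1 : K)) := by
      funext j; rw [aeval_X]
    have hCfam : (fun j => MvPolynomial.aeval (fun j' => monomial (e j') (1:K))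
        (((1 : MvPolynomial (Fin n) K) - C ((c j : K)) * X j) ^ m j))
        = (fun j : Fin n =>
          ((1 : MvPolynomial (Fin d) K) - MvPolynomial.monomial (e j) ((c j : K))) ^ m j) := by
      funext j
      rw [map_pow, map_sub, map_one, map_mul, aeval_X, aeval_C, algebraMap_eq, C_mul_monomial,
        mul_one]
    constructor
    · constructor
      · exact aToB e
      · intro hb
        by_contra hna
        exact key _ hna (hBfam ▸ hb)
    · constructor
      · intro hb
        have htr : ∀ j, Transcendental K
            (((1 : Polynomial K) - Polynomial.C ((c j : K)) * Polynomial.X) ^ m j) := by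
          intro j
          have hdeg1 : ((1 : Polynomial K) - Polynomial.C ((c j : K)) * Polynomial.X).natDegree
              = 1 := by
            have : (1 : Polynomial K) - Polynomial.C ((c j : K)) * Polynomial.X
                = Polynomial.C (-(c j : K)) * Polynomial.X + Polynomial.C 1 := by
              simp [Polynomial.C_neg]; ring
            rw [this]
            exact Polynomial.natDegree_linear (neg_ne_zero.2 (c j).ne_zero)
          have hp0 : ((1 : Polynomial K) - Polynomial.C ((c j : K)) * Polynomial.X) ≠ 0 := by
            intro h
            rw [h] at hdeg1
            simp at hdeg1
          refine Polynomial.transcendental _ ?_ ?_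
          · rw [Polynomial.natDegree_pow, hdeg1, mul_one]
            have := hm j
            omega
          · exact mem_nonZeroDivisors_of_ne_zero
              (Polynomial.leadingCoeff_ne_zero.2 (pow_ne_zero _ hp0))
        have h2 := hb.polynomial_aeval_of_transcendental htr
        have h3 : (fun j => Polynomial.aeval (monomial (e j) (1:K))
            (((1 : Polynomial K) - Polynomial.C ((c j : K)) * Polynomial.X) ^ m j))
            = (fun j : Fin n =>
              ((1 : MvPolynomial (Fin d) K) - MvPolynomial.monomial (e j) ((c j : K))) ^ m j) := by
          funext j
          rw [map_pow, map_sub, map_one, map_mul, Polynomial.aeval_X, Polynomial.aeval_C,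
            algebraMap_eq, C_mul_monomial, mul_one]
        rwa [h3] at h2
      · intro hc
        by_contra hnb
        have hna : ¬ LinearIndependent ℤ (fun j : Fin n => fun i : Fin d => (e j i : ℤ)) :=
          fun ha => hnb (aToB e ha)
        exact key _ hna (hCfam ▸ hc)
  · push_neg at he
    obtain ⟨j0, hj0⟩ := he
    have ha' : ¬ LinearIndependent ℤ (fun j : Fin n => fun i : Fin d => (e j i : ℤ)) := by
      intro h
      refine h.ne_zero j0 ?_
      funext i
      rw [hj0]
      simp
    have hb' : ¬ AlgebraicIndependent K (fun j : Fin n => MvPolynomial.monomial (e j) (1 : K)) := by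
      intro h
      have ht := h.transcendental j0
      refine ht ?_
      have : (MvPolynomial.monomial (e j0) (1:K) : MvPolynomial (Fin d) K)
          = algebraMap K _ 1 := by
        rw [hj0, algebraMap_eq]
        simp [monomial_zero']
      rw [this]
      exact isAlgebraic_algebraMap 1
    have hc' : ¬ AlgebraicIndependent K
        (fun j : Fin n =>
          ((1 : MvPolynomial (Fin d) K) - MvPolynomial.monomial (e j) ((c j : K))) ^ m j) := by
      intro h
      have ht := h.transcendental j0
      refine ht ?_
      have : ((1 : MvPolynomial (Fin d) K) - MvPolynomial.monomial (e j0) ((c j0 : K))) ^ m j0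
          = algebraMap K _ ((1 - (c j0 : K)) ^ m j0) := by
        rw [hj0, algebraMap_eq, map_pow]
        congr 1
        simp [monomial_zero', map_sub]
      rw [this]
      exact isAlgebraic_algebraMap _
    exact ⟨⟨fun h => absurd h ha', fun h => absurd h hb'⟩,
      ⟨fun h => absurd h hb', fun h => absurd h hc'⟩⟩
end

section
/- Let K be a field of characteristic 0, let F = Σ_{n ∈ ℕ^d} f(n)x^n ∈ K⟦x₁,…,x_d⟧ be a skew-geometric series, and let S ⊆ ℕ^d be a simple linear set contained in the support of F. Then the restricted series F ⊙ 1_S = Σ_{n ∈ S} f(n)x^n is skew-geometric. -/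
namespace SkewGeomAux

open MvPowerSeries

variable {K : Type*} [Field K] {d : ℕ}

noncomputable def mu {l : ℕ} (u₀ : Fin d →₀ ℕ) (u : Fin l → (Fin d →₀ ℕ)) (m : Fin l → ℕ) :
    Fin d →₀ ℕ :=
  u₀ + ∑ j, m j • u j

lemma mu_apply_int {l : ℕ} (u₀ : Fin d →₀ ℕ) (u : Fin l → (Fin d →₀ ℕ))
    (m : Fin l → ℕ) (i : Fin d) :
    ((mu u₀ u m i : ℕ) : ℤ) = (u₀ i : ℤ) + ∑ j, (m j : ℤ) * (u j i : ℤ) := by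
  simp [mu, Finsupp.add_apply, Finsupp.finset_sum_apply, Finsupp.smul_apply,
    smul_eq_mul]

lemma mu_injective {l : ℕ} (u₀ : Fin d →₀ ℕ) (u : Fin l → (Fin d →₀ ℕ))
    (hli : LinearIndependent ℤ (fun j : Fin l => fun i : Fin d => (u j i : ℤ))) :
    Function.Injective (mu u₀ u) := by
  intro m m' h
  rw [Fintype.linearIndependent_iff] at hli
  have key : ∀ j, ((m j : ℤ) - m' j) = 0 := by
    apply hli
    funext i
    have h2 := congrArg (fun n : Fin d →₀ ℕ => ((n i : ℕ) : ℤ)) h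
    simp only [mu_apply_int] at h2
    simp only [Finset.sum_apply, Pi.smul_apply, smul_eq_mul, Pi.zero_apply,
      sub_mul, Finset.sum_sub_distrib]
    linarith
  funext j
  have := key j
  omega

lemma mu_add_single {l : ℕ} (u₀ : Fin d →₀ ℕ) (u : Fin l → (Fin d →₀ ℕ))
    (m : Fin l → ℕ) (j₀ : Fin l) (t : ℕ) :
    mu u₀ u (m + Pi.single j₀ t) = mu u₀ u m + t • u j₀ := by
  simp only [mu, Pi.add_apply, add_smul, Finset.sum_add_distrib, ← add_assoc]
  congr 1
  simp [Pi.single_apply, ite_smul, Finset.sum_ite_eq']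

open Classical in
noncomputable def Hser (c₀ : K) {l : ℕ} (c : Fin l → Kˣ) (u₀ : Fin d →₀ ℕ)
    (u : Fin l → (Fin d →₀ ℕ)) : MvPowerSeries (Fin d) K :=
  fun n => if h : ∃ m : Fin l → ℕ, n = mu u₀ u m then
    c₀ * ∏ j, (c j : K) ^ (h.choose j) else 0

lemma Hser_coeff_mu {l : ℕ} (c₀ : K) (c : Fin l → Kˣ) (u₀ : Fin d →₀ ℕ)
    (u : Fin l → (Fin d →₀ ℕ)) (hinj : Function.Injective (mu u₀ u)) (m : Fin l → ℕ) :
    MvPowerSeries.coeff (mu u₀ u m) (Hser c₀ c u₀ u) = c₀ * ∏ j, (c j : K) ^ (m j) := by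
  have h : ∃ m' : Fin l → ℕ, mu u₀ u m = mu u₀ u m' := ⟨m, rfl⟩
  rw [MvPowerSeries.coeff_apply, Hser, dif_pos h]
  have : h.choose = m := (hinj h.choose_spec).symm
  rw [this]

lemma Hser_coeff_of_not {l : ℕ} (c₀ : K) (c : Fin l → Kˣ) (u₀ : Fin d →₀ ℕ)
    (u : Fin l → (Fin d →₀ ℕ)) {n : Fin d →₀ ℕ}
    (h : ¬ ∃ m : Fin l → ℕ, n = mu u₀ u m) :
    MvPowerSeries.coeff n (Hser c₀ c u₀ u) = 0 := by
  rw [MvPowerSeries.coeff_apply, Hser, dif_neg h]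

lemma mu_trunc {l : ℕ} (u₀ : Fin d →₀ ℕ) (u : Fin (l+1) → (Fin d →₀ ℕ)) (m : Fin l → ℕ) :
    mu u₀ (u ∘ Fin.castSucc) m = mu u₀ u (Fin.snoc m 0) := by
  simp [mu, Fin.sum_univ_castSucc, Fin.snoc_castSucc, Fin.snoc_last]

lemma mu_trunc_injective {l : ℕ} (u₀ : Fin d →₀ ℕ) (u : Fin (l+1) → (Fin d →₀ ℕ))
    (hinj : Function.Injective (mu u₀ u)) :
    Function.Injective (mu u₀ (u ∘ Fin.castSucc)) := by
  intro m m' h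
  rw [mu_trunc, mu_trunc] at h
  have h2 := hinj h
  funext j
  have := congrFun h2 (Fin.castSucc j)
  simpa using this

lemma Hser_mul_last {l : ℕ} (c₀ : K) (c : Fin (l+1) → Kˣ) (u₀ : Fin d →₀ ℕ)
    (u : Fin (l+1) → (Fin d →₀ ℕ)) (hinj : Function.Injective (mu u₀ u)) :
    Hser c₀ c u₀ u * (1 - MvPowerSeries.monomial (u (Fin.last l)) ((c (Fin.last l) : K))) =
      Hser c₀ (c ∘ Fin.castSucc) u₀ (u ∘ Fin.castSucc) := by
  apply MvPowerSeries.ext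
  intro n
  rw [mul_sub, mul_one, map_sub, MvPowerSeries.coeff_mul_monomial]
  by_cases hn : ∃ m : Fin (l+1) → ℕ, n = mu u₀ u m
  · obtain ⟨m, rfl⟩ := hn
    by_cases hm : m (Fin.last l) = 0
    · have hmsnoc : Fin.snoc (m ∘ Fin.castSucc) 0 = m := by
        funext j
        induction j using Fin.lastCases with
        | last => simp [hm]
        | cast j => simp
      have h1 : mu u₀ (u ∘ Fin.castSucc) (m ∘ Fin.castSucc) = mu u₀ u m := by
        rw [mu_trunc, hmsnoc]
      have hRHS : MvPowerSeries.coeff (mu u₀ u m) (Hser c₀ (c ∘ Fin.castSucc) u₀ (u ∘ Fin.castSucc))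
          = c₀ * ∏ j : Fin l, ((c (Fin.castSucc j) : K)) ^ (m (Fin.castSucc j)) := by
        rw [← h1, Hser_coeff_mu _ _ _ _ (mu_trunc_injective u₀ u hinj)]
        rfl
      rw [hRHS, Hser_coeff_mu _ _ _ _ hinj]
      have hsub0 : (if u (Fin.last l) ≤ mu u₀ u m then
          MvPowerSeries.coeff (mu u₀ u m - u (Fin.last l)) (Hser c₀ c u₀ u) *
            (c (Fin.last l) : K) else 0) = 0 := by
        split_ifs with hle
        · rw [Hser_coeff_of_not, zero_mul]
          rintro ⟨m', hm'⟩
          have heq : mu u₀ u m = mu u₀ u (m' + Pi.single (Fin.last l) 1) := by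
            rw [mu_add_single, one_smul, ← hm', tsub_add_cancel_of_le hle]
          have h3 := congrFun (hinj heq) (Fin.last l)
          simp [Pi.add_apply, Pi.single_eq_same, hm] at h3
        · rfl
      rw [hsub0, sub_zero, Fin.prod_univ_castSucc, hm, pow_zero, mul_one]
    · set m' : Fin (l+1) → ℕ := fun j => m j - (Pi.single (Fin.last l) 1 : Fin (l+1) → ℕ) j with hm'def
      have hmm : m = m' + Pi.single (Fin.last l) 1 := by
        funext j
        by_cases hj : j = Fin.last l
        · subst hj
          simp only [Pi.add_apply, hm'def, Pi.single_eq_same]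
          omega
        · simp only [Pi.add_apply, hm'def, Pi.single_apply, if_neg hj]
          omega
      have hmuv : mu u₀ u m = mu u₀ u m' + u (Fin.last l) := by
        conv_lhs => rw [hmm]
        rw [mu_add_single, one_smul]
      have hle : u (Fin.last l) ≤ mu u₀ u m := by rw [hmuv]; exact le_add_self
      have hsub : mu u₀ u m - u (Fin.last l) = mu u₀ u m' := by
        rw [hmuv]; exact add_tsub_cancel_right _ _
      rw [if_pos hle, hsub, Hser_coeff_mu _ _ _ _ hinj, Hser_coeff_mu _ _ _ _ hinj,
        Hser_coeff_of_not]
      · have hprod : ∏ j, ((c j : K)) ^ (m j)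
            = (∏ j, ((c j : K)) ^ (m' j)) * (c (Fin.last l) : K) := by
          conv_lhs => rw [hmm]
          simp only [Pi.add_apply, pow_add, Finset.prod_mul_distrib]
          congr 1
          simp [Pi.single_apply, apply_ite (fun t => ((c _ : K)) ^ t)]
        rw [hprod]; ring
      · rintro ⟨m'', h''⟩
        rw [mu_trunc] at h''
        have h3 := congrFun (hinj h'') (Fin.last l)
        simp [hm] at h3
  · have h0 : MvPowerSeries.coeff n (Hser c₀ c u₀ u) = 0 :=
      Hser_coeff_of_not _ _ _ _ hn
    have h1 : MvPowerSeries.coeff n (Hser c₀ (c ∘ Fin.castSucc) u₀ (u ∘ Fin.castSucc)) = 0 := by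
      apply Hser_coeff_of_not
      rintro ⟨m'', rfl⟩
      exact hn ⟨Fin.snoc m'' 0, mu_trunc u₀ u m''⟩
    have h2 : (if u (Fin.last l) ≤ n then
        MvPowerSeries.coeff (n - u (Fin.last l)) (Hser c₀ c u₀ u) * (c (Fin.last l) : K)
        else 0) = 0 := by
      split_ifs with hle
      · rw [Hser_coeff_of_not, zero_mul]
        rintro ⟨m', hm'⟩
        exact hn ⟨m' + Pi.single (Fin.last l) 1, by
          rw [mu_add_single, one_smul, ← hm', tsub_add_cancel_of_le hle]⟩
      · rfl
    rw [h0, h1, h2, sub_zero]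

lemma Hser_spec : ∀ (l : ℕ) (c₀ : K) (c : Fin l → Kˣ) (u₀ : Fin d →₀ ℕ)
    (u : Fin l → (Fin d →₀ ℕ)), Function.Injective (mu u₀ u) →
    Hser c₀ c u₀ u * ∏ j, (1 - MvPowerSeries.monomial (u j) ((c j : K))) =
      MvPowerSeries.monomial u₀ c₀
  | 0, c₀, c, u₀, u, _ => by
    rw [Fin.prod_univ_zero, mul_one]
    apply MvPowerSeries.ext
    intro n
    classical
    rw [MvPowerSeries.coeff_monomial]
    by_cases h : n = u₀
    · subst h
      have hmu : (n : Fin d →₀ ℕ) = mu n u (fun j => 0) := by simp [mu]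
      rw [if_pos rfl]
      have hv := Hser_coeff_mu c₀ c n u (fun m m' _ => Subsingleton.elim m m') (fun _ => 0)
      rw [← hmu] at hv
      rw [hv]
      simp
    · rw [if_neg h, Hser_coeff_of_not]
      rintro ⟨m, rfl⟩
      exact h (by simp [mu])
  | (l+1), c₀, c, u₀, u, hinj => by
    rw [Fin.prod_univ_castSucc, show ∀ H A B : MvPowerSeries (Fin d) K,
      H * (A * B) = H * B * A from fun _ _ _ => by ring,
      Hser_mul_last c₀ c u₀ u hinj]
    exact Hser_spec l c₀ (c ∘ Fin.castSucc) u₀ (u ∘ Fin.castSucc)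
      (mu_trunc_injective u₀ u hinj)

lemma eq_Hser {l : ℕ} (F : MvPowerSeries (Fin d) K) (c₀ : K) (c : Fin l → Kˣ)
    (u₀ : Fin d →₀ ℕ) (u : Fin l → (Fin d →₀ ℕ))
    (hli : LinearIndependent ℤ (fun j : Fin l => fun i : Fin d => (u j i : ℤ)))
    (heq : F * ∏ j, (1 - MvPowerSeries.monomial (u j) ((c j : K))) =
      MvPowerSeries.monomial u₀ c₀) :
    F = Hser c₀ c u₀ u := by
  classical
  have hinj := mu_injective u₀ u hli
  have hzero : ∀ j, u j ≠ 0 := by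
    intro j h
    apply hli.ne_zero j
    funext i
    simp [h]
  have hconst : (MvPowerSeries.constantCoeff)
      (∏ j, (1 - MvPowerSeries.monomial (u j) ((c j : K)))) = 1 := by
    rw [map_prod]
    apply Finset.prod_eq_one
    intro j _
    rw [map_sub, map_one, ← MvPowerSeries.coeff_zero_eq_constantCoeff_apply,
      MvPowerSeries.coeff_monomial, if_neg (fun h => hzero j h.symm)]
    ring
  have hPne : (∏ j, (1 - MvPowerSeries.monomial (u j) ((c j : K)))) ≠ 0 := by
    intro h
    rw [h, map_zero] at hconst
    exact zero_ne_one hconst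
  exact mul_right_cancel₀ hPne (heq.trans (Hser_spec l c₀ c u₀ u hinj).symm)

lemma zpow_finsetSum {G : Type*} [CommGroup G] (x : G) {ι : Type*} (s : Finset ι)
    (f : ι → ℤ) : x ^ (∑ i ∈ s, f i) = ∏ i ∈ s, x ^ f i := by
  classical
  induction s using Finset.induction with
  | empty => simp
  | insert a t h ih => rw [Finset.sum_insert h, Finset.prod_insert h, zpow_add, ih]

end SkewGeomAux


/-- A subset `S ⊆ ℕ^d` is simple linear if `S = a₀ + a₁ℕ + ⋯ + a_sℕ` with
`a₁, …, a_s ∈ ℕ^d` linearly independent over `ℤ`. -/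
def IsSimpleLinear {d : ℕ} (S : Set (Fin d →₀ ℕ)) : Prop :=
  ∃ (s : ℕ) (a₀ : Fin d →₀ ℕ) (a : Fin s → (Fin d →₀ ℕ)),
    LinearIndependent ℤ (fun j : Fin s => fun i : Fin d => (a j i : ℤ)) ∧
    S = {n | ∃ m : Fin s → ℕ, n = a₀ + ∑ i, m i • a i}

/-- `F` is skew-geometric: `F·(1−c₁u₁)⋯(1−c_lu_l) = c₀u₀` with `c₀ ∈ K`, `cⱼ ∈ Kˣ` and
monomials `u₀, …, u_l` whose exponent vectors `u₁, …, u_l` are `ℤ`-linearly independent. -/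
def IsSkewGeometric {K : Type*} [Field K] {d : ℕ} (F : MvPowerSeries (Fin d) K) : Prop :=
  ∃ (l : ℕ) (c₀ : K) (c : Fin l → Kˣ) (u₀ : Fin d →₀ ℕ) (u : Fin l → (Fin d →₀ ℕ)),
    LinearIndependent ℤ (fun j : Fin l => fun i : Fin d => (u j i : ℤ)) ∧
    F * ∏ j, (1 - MvPowerSeries.monomial (u j) ((c j : K))) =
      MvPowerSeries.monomial u₀ c₀

/-- The restriction `F ⊙ 1_S` of a power series to a set `S` of exponents:
its coefficient at `n` is that of `F` if `n ∈ S` and `0` otherwise. -/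
noncomputable def restrictPS {K : Type*} [Field K] {d : ℕ} (S : Set (Fin d →₀ ℕ))
    (F : MvPowerSeries (Fin d) K) : MvPowerSeries (Fin d) K :=
  fun n => S.indicator (fun m => MvPowerSeries.coeff m F) n

/-- **Lemma.** If `F` is skew-geometric and `S` is a simple linear set contained in the
support of `F`, then `F ⊙ 1_S` is skew-geometric. -/
theorem skewGeometric_restrict {K : Type*} [Field K] [CharZero K] {d : ℕ}
    (F : MvPowerSeries (Fin d) K) (hF : IsSkewGeometric F)
    (S : Set (Fin d →₀ ℕ)) (hS : IsSimpleLinear S)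
    (hsub : S ⊆ {n | MvPowerSeries.coeff n F ≠ 0}) :
    IsSkewGeometric (restrictPS S F) := by
  classical
  open SkewGeomAux in
  obtain ⟨l, c₀, c, u₀, u, hu_li, hFeq⟩ := hF
  obtain ⟨s, a₀, a, ha_li, hSeq⟩ := hS
  have huinj := mu_injective u₀ u hu_li
  have hainj := mu_injective a₀ a ha_li
  have hFH : F = Hser c₀ c u₀ u := eq_Hser F c₀ c u₀ u hu_li hFeq
  have hSmu : S = {n | ∃ k : Fin s → ℕ, n = mu a₀ a k} := hSeq
  have hex : ∀ k : Fin s → ℕ, ∃ M : Fin l → ℕ, mu a₀ a k = mu u₀ u M := by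
    intro k
    have hmem : mu a₀ a k ∈ S := by rw [hSmu]; exact ⟨k, rfl⟩
    have hne := hsub hmem
    by_contra h
    exact hne (by rw [hFH]; exact Hser_coeff_of_not _ _ _ _ h)
  choose M hM using hex
  have Ek : ∀ (k : Fin s → ℕ) (i : Fin d),
      ∑ j, (M k j : ℤ) * (u j i : ℤ)
        = (a₀ i : ℤ) + (∑ t, (k t : ℤ) * (a t i : ℤ)) - (u₀ i : ℤ) := by
    intro k i
    have h2 := congrArg (fun n : Fin d →₀ ℕ => ((n i : ℕ) : ℤ)) (hM k)
    simp only [mu_apply_int] at h2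
    linarith
  have hE0 : ∀ i, ∑ j, (M 0 j : ℤ) * (u j i : ℤ) = (a₀ i : ℤ) - (u₀ i : ℤ) := by
    intro i
    have := Ek 0 i
    simpa using this
  have hEt : ∀ (t : Fin s) (i : Fin d),
      ∑ j, (M (Pi.single t 1) j : ℤ) * (u j i : ℤ)
        = (a₀ i : ℤ) + (a t i : ℤ) - (u₀ i : ℤ) := by
    intro t i
    have := Ek (Pi.single t 1) i
    simpa [Pi.single_apply, apply_ite (fun n : ℕ => (n : ℤ)), ite_mul,
      Finset.sum_ite_eq'] using this
  have key : ∀ (k : Fin s → ℕ) (j : Fin l),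
      (M k j : ℤ) = (M 0 j : ℤ)
        + ∑ t, (k t : ℤ) * ((M (Pi.single t 1) j : ℤ) - (M 0 j : ℤ)) := by
    intro k
    have hu := Fintype.linearIndependent_iff.mp hu_li
    have hz := hu (fun j => (M k j : ℤ) - ((M 0 j : ℤ)
        + ∑ t, (k t : ℤ) * ((M (Pi.single t 1) j : ℤ) - (M 0 j : ℤ)))) ?_
    · intro j
      have := hz j
      linarith
    · funext i
      simp only [Finset.sum_apply, Pi.smul_apply, smul_eq_mul, Pi.zero_apply]
      have T1 : ∑ j, ((M k j : ℤ) - ((M 0 j : ℤ)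
            + ∑ t, (k t : ℤ) * ((M (Pi.single t 1) j : ℤ) - (M 0 j : ℤ)))) * (u j i : ℤ)
          = ∑ j, ((M k j : ℤ) * (u j i : ℤ) - (M 0 j : ℤ) * (u j i : ℤ)
            - ∑ t, (k t : ℤ) * ((M (Pi.single t 1) j : ℤ) * (u j i : ℤ)
              - (M 0 j : ℤ) * (u j i : ℤ))) := by
        apply Finset.sum_congr rfl
        intro j _
        have hin : (∑ t, (k t : ℤ) * ((M (Pi.single t 1) j : ℤ) - (M 0 j : ℤ))) * (u j i : ℤ)
            = ∑ t, (k t : ℤ) * ((M (Pi.single t 1) j : ℤ) * (u j i : ℤ)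
              - (M 0 j : ℤ) * (u j i : ℤ)) := by
          rw [Finset.sum_mul]
          exact Finset.sum_congr rfl (fun t _ => by ring)
        rw [← hin]
        ring
      have T2 : ∑ j, ∑ t, (k t : ℤ) * ((M (Pi.single t 1) j : ℤ) * (u j i : ℤ)
            - (M 0 j : ℤ) * (u j i : ℤ))
          = ∑ t, (k t : ℤ) * (a t i : ℤ) := by
        rw [Finset.sum_comm]
        apply Finset.sum_congr rfl
        intro t _
        rw [← Finset.mul_sum, Finset.sum_sub_distrib, hEt t i, hE0 i]
        ring
      rw [T1, Finset.sum_sub_distrib, Finset.sum_sub_distrib, T2, Ek k i, hE0 i]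
      ring
  set bb : Fin s → Fin l → ℤ :=
    fun t j => (M (Pi.single t 1) j : ℤ) - (M 0 j : ℤ) with hbb
  set dd : Fin s → Kˣ := fun t => ∏ j, (c j) ^ (bb t j) with hdd
  set C : Kˣ := ∏ j, (c j) ^ (M 0 j) with hC
  have hunits : ∀ k : Fin s → ℕ,
      (∏ j, (c j) ^ (M k j) : Kˣ) = C * ∏ t, (dd t) ^ (k t) := by
    intro k
    have hjj : ∀ j : Fin l, (c j) ^ (M k j)
        = (c j) ^ (M 0 j) * ∏ t, ((c j) ^ (bb t j)) ^ (k t) := by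
      intro j
      rw [← zpow_natCast (c j) (M k j), key k j, zpow_add, zpow_natCast]
      congr 1
      rw [zpow_finsetSum]
      apply Finset.prod_congr rfl
      intro t _
      rw [mul_comm ((k t : ℤ)) _, zpow_mul, zpow_natCast]
    rw [Finset.prod_congr rfl (fun j _ => hjj j), Finset.prod_mul_distrib, hC]
    congr 1
    rw [Finset.prod_comm]
    apply Finset.prod_congr rfl
    intro t _
    rw [Finset.prod_pow]
  have hunitsK : ∀ k : Fin s → ℕ,
      (∏ j, ((c j : K)) ^ (M k j)) = (C : K) * ∏ t, ((dd t : K)) ^ (k t) := by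
    intro k
    have h2 := congrArg (Units.coeHom K) (hunits k)
    simpa [map_prod, map_pow, map_mul] using h2
  have hG : restrictPS S F = Hser (c₀ * (C : K)) dd a₀ a := by
    apply MvPowerSeries.ext
    intro n
    rw [MvPowerSeries.coeff_apply, restrictPS]
    by_cases hn : n ∈ S
    · rw [Set.indicator_of_mem hn]
      have hn' : ∃ k : Fin s → ℕ, n = mu a₀ a k := by rw [hSmu] at hn; exact hn
      obtain ⟨k, rfl⟩ := hn'
      rw [Hser_coeff_mu _ _ _ _ hainj, hFH, hM k, Hser_coeff_mu _ _ _ _ huinj,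
        hunitsK k]
      ring
    · rw [Set.indicator_of_notMem hn, Hser_coeff_of_not]
      rintro ⟨k, rfl⟩
      exact hn (by rw [hSmu]; exact ⟨k, rfl⟩)
  exact ⟨s, c₀ * (C : K), dd, a₀, a, ha_li, by
    rw [hG]; exact Hser_spec s (c₀ * (C : K)) dd a₀ a hainj⟩
end
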